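/- Let X, Y be Banach spaces and K a compact Hausdorff space. If the pair (X × Y, 𝕂) has the Bishop-Phelps-Bollobás point property for bilinear forms, then the pair (X × Y, C(K)) has the Bishop-Phelps-Bollobás point property for compact bilinear mappings: for every ε > 0 there exists η(ε) > 0 such that whenever B: X × Y → C(K) is a compact bilinear mapping with ‖B‖ = 1 and (x₀,y₀) ∈ S_X × S_Y satisfy ‖B(x₀,y₀)‖_∞ > 1 − η(ε), there exists a compact bilinear mapping A: X × Y → C(K) with ‖A‖ = 1, ‖A(x₀,y₀)‖_∞ = 1, and ‖A − B‖ < ε. -/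

import Mathlib

open RCLike


def BPBppBilin (𝕜 X Y Z : Type*) [RCLike 𝕜] [NormedAddCommGroup X] [NormedSpace 𝕜 X]
    [NormedAddCommGroup Y] [NormedSpace 𝕜 Y] [NormedAddCommGroup Z] [NormedSpace 𝕜 Z] : Prop :=
  ∀ ε > (0:ℝ), ∃ η > (0:ℝ), ∀ (B : X →L[𝕜] Y →L[𝕜] Z) (x : X) (y : Y),
    ‖B‖ = 1 → ‖x‖ = 1 → ‖y‖ = 1 → 1 - η < ‖B x y‖ →
    ∃ A : X →L[𝕜] Y →L[𝕜] Z, ‖A‖ = 1 ∧ ‖A x y‖ = 1 ∧ ‖A - B‖ < ε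


def CompactBilinear {𝕜 X Y Z : Type*} [RCLike 𝕜] [NormedAddCommGroup X] [NormedSpace 𝕜 X]
    [NormedAddCommGroup Y] [NormedSpace 𝕜 Y] [NormedAddCommGroup Z] [NormedSpace 𝕜 Z]
    (B : X →L[𝕜] Y →L[𝕜] Z) : Prop :=
  TotallyBounded (Set.image2 (fun x y => B x y) (Metric.closedBall (0:X) 1) (Metric.closedBall (0:Y) 1))

/-- Scaling helper: a bound on the closed unit balls gives a global bilinear bound. -/
lemma bilin_bound_of_unit {𝕜 X Y Z : Type*} [RCLike 𝕜] [NormedAddCommGroup X] [NormedSpace 𝕜 X]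
    [NormedAddCommGroup Y] [NormedSpace 𝕜 Y] [NormedAddCommGroup Z] [NormedSpace 𝕜 Z]
    (T : X →L[𝕜] Y →L[𝕜] Z) {C : ℝ} (_hC : 0 ≤ C)
    (hb : ∀ x : X, ‖x‖ ≤ 1 → ∀ y : Y, ‖y‖ ≤ 1 → ‖T x y‖ ≤ C) (x : X) (y : Y) :
    ‖T x y‖ ≤ C * ‖x‖ * ‖y‖ := by
  rcases eq_or_ne x 0 with rfl | hx
  · simp
  rcases eq_or_ne y 0 with rfl | hy
  · simp
  have hxp : (0:ℝ) < ‖x‖ := norm_pos_iff.mpr hx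
  have hyp : (0:ℝ) < ‖y‖ := norm_pos_iff.mpr hy
  have hux : ‖(((‖x‖ : ℝ) : 𝕜))⁻¹ • x‖ = 1 := by
    rw [norm_smul, norm_inv, RCLike.norm_ofReal, abs_of_pos hxp, inv_mul_cancel₀ hxp.ne']
  have huy : ‖(((‖y‖ : ℝ) : 𝕜))⁻¹ • y‖ = 1 := by
    rw [norm_smul, norm_inv, RCLike.norm_ofReal, abs_of_pos hyp, inv_mul_cancel₀ hyp.ne']
  have h3 := hb _ hux.le _ huy.le
  simp only [map_smul, ContinuousLinearMap.smul_apply, norm_smul, norm_inv,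
    RCLike.norm_ofReal, abs_of_pos hxp, abs_of_pos hyp] at h3
  have h5 := mul_le_mul_of_nonneg_left h3 (show (0:ℝ) ≤ ‖x‖ * ‖y‖ by positivity)
  have heq : ‖x‖ * ‖y‖ * (‖y‖⁻¹ * (‖x‖⁻¹ * ‖T x y‖)) = ‖T x y‖ := by
    field_simp
  rw [heq] at h5
  have : ‖x‖ * ‖y‖ * C = C * ‖x‖ * ‖y‖ := by ring
  linarith

set_option maxHeartbeats 10000000 in
theorem stmt_15 (𝕜 X Y K : Type*) [RCLike 𝕜] [NormedAddCommGroup X] [NormedSpace 𝕜 X]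
    [CompleteSpace X] [NormedAddCommGroup Y] [NormedSpace 𝕜 Y] [CompleteSpace Y]
    [TopologicalSpace K] [CompactSpace K] [T2Space K]
    (h : BPBppBilin 𝕜 X Y 𝕜) :
    ∀ ε > (0:ℝ), ∃ η > (0:ℝ), ∀ (B : X →L[𝕜] Y →L[𝕜] C(K, 𝕜)) (x₀ : X) (y₀ : Y),
      CompactBilinear B → ‖B‖ = 1 → ‖x₀‖ = 1 → ‖y₀‖ = 1 → 1 - η < ‖B x₀ y₀‖ →
      ∃ A : X →L[𝕜] Y →L[𝕜] C(K, 𝕜), CompactBilinear A ∧ ‖A‖ = 1 ∧ ‖A x₀ y₀‖ = 1 ∧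
        ‖A - B‖ < ε := by
  intro ε hε
  obtain ⟨η₀, hη₀, hbpb⟩ := h (ε/4) (by linarith)
  refine ⟨min (min η₀ (ε/4)) (1/2), lt_min (lt_min hη₀ (by linarith)) one_half_pos, ?_⟩
  set η : ℝ := min (min η₀ (ε/4)) (1/2) with hηdef
  have hηη₀ : η ≤ η₀ := le_trans (min_le_left _ _) (min_le_left _ _)
  have hηε : η ≤ ε/4 := le_trans (min_le_left _ _) (min_le_right _ _)
  have hη2 : η ≤ 1/2 := min_le_right _ _
  intro B x₀ y₀ hBcomp hB1 hx₀ hy₀ hclose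
  -- K is nonempty
  have hne : Nonempty K := by
    by_contra hKe
    rw [not_nonempty_iff] at hKe
    have hz : (B x₀ y₀) = 0 := by ext t; exact isEmptyElim t
    rw [hz, norm_zero] at hclose
    linarith
  -- pick a point where the norm of `B x₀ y₀` is attained (up to ≤)
  obtain ⟨t₀, -, ht₀max⟩ := isCompact_univ.exists_isMaxOn Set.univ_nonempty
    ((map_continuous (B x₀ y₀)).norm.continuousOn (s := Set.univ))
  have ht₀ : ‖B x₀ y₀‖ ≤ ‖B x₀ y₀ t₀‖ :=
    (ContinuousMap.norm_le _ (norm_nonneg _)).mpr fun t => ht₀max (Set.mem_univ t)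
  -- the scalar bilinear forms obtained by evaluation
  set e : K → (X →L[𝕜] Y →L[𝕜] 𝕜) := fun t =>
    (ContinuousLinearMap.compL 𝕜 Y C(K,𝕜) 𝕜 (ContinuousMap.evalCLM 𝕜 t)).comp B with hedef
  have he : ∀ t x y, e t x y = B x y t := fun _ _ _ => rfl
  have hBxyle : ∀ (x : X) (y : Y), ‖B x y‖ ≤ ‖x‖ * ‖y‖ := by
    intro x y
    calc ‖B x y‖ ≤ ‖B x‖ * ‖y‖ := (B x).le_opNorm y
      _ ≤ ‖B‖ * ‖x‖ * ‖y‖ := mul_le_mul_of_nonneg_right (B.le_opNorm x) (norm_nonneg y)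
      _ = ‖x‖ * ‖y‖ := by rw [hB1]; ring
  have hB₀le : ‖e t₀‖ ≤ 1 := by
    refine ContinuousLinearMap.opNorm_le_bound _ zero_le_one fun x => ?_
    refine ContinuousLinearMap.opNorm_le_bound _ (by positivity) fun y => ?_
    rw [he]
    calc ‖B x y t₀‖ ≤ ‖B x y‖ := ContinuousMap.norm_coe_le_norm _ _
      _ ≤ ‖x‖ * ‖y‖ := hBxyle x y
      _ = 1 * ‖x‖ * ‖y‖ := by ring
  have hB₀x : 1 - η < ‖e t₀ x₀ y₀‖ := by rw [he]; exact lt_of_lt_of_le hclose ht₀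
  have hB₀pos : 0 < ‖e t₀‖ := by
    have h1 : ‖e t₀ x₀ y₀‖ ≤ ‖e t₀‖ := by
      calc ‖e t₀ x₀ y₀‖ ≤ ‖e t₀ x₀‖ * ‖y₀‖ := (e t₀ x₀).le_opNorm y₀
        _ ≤ ‖e t₀‖ * ‖x₀‖ * ‖y₀‖ :=
            mul_le_mul_of_nonneg_right ((e t₀).le_opNorm x₀) (norm_nonneg y₀)
        _ = ‖e t₀‖ := by rw [hx₀, hy₀]; ring
    linarith
  have hB₀gt : 1 - η < ‖e t₀‖ := by
    have h1 : ‖e t₀ x₀ y₀‖ ≤ ‖e t₀‖ := by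
      calc ‖e t₀ x₀ y₀‖ ≤ ‖e t₀ x₀‖ * ‖y₀‖ := (e t₀ x₀).le_opNorm y₀
        _ ≤ ‖e t₀‖ * ‖x₀‖ * ‖y₀‖ :=
            mul_le_mul_of_nonneg_right ((e t₀).le_opNorm x₀) (norm_nonneg y₀)
        _ = ‖e t₀‖ := by rw [hx₀, hy₀]; ring
    linarith
  -- normalize
  set c : 𝕜 := (((‖e t₀‖ : ℝ) : 𝕜))⁻¹ with hcdef
  have hcnorm : ‖c‖ = ‖e t₀‖⁻¹ := by
    rw [hcdef, norm_inv, RCLike.norm_ofReal, abs_of_pos hB₀pos]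
  set B₁ : X →L[𝕜] Y →L[𝕜] 𝕜 :=
    (ContinuousLinearMap.compL 𝕜 Y 𝕜 𝕜 (ContinuousLinearMap.mul 𝕜 𝕜 c)).comp (e t₀)
    with hB₁def
  have hB₁app : ∀ (x : X) (y : Y), B₁ x y = c * (e t₀ x y) := fun _ _ => rfl
  have hinv1 : 1 ≤ ‖e t₀‖⁻¹ := (one_le_inv₀ hB₀pos).mpr hB₀le
  have he_le : ∀ (x : X) (y : Y), ‖e t₀ x y‖ ≤ ‖e t₀‖ * ‖x‖ * ‖y‖ := by
    intro x y
    calc ‖e t₀ x y‖ ≤ ‖e t₀ x‖ * ‖y‖ := (e t₀ x).le_opNorm y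
      _ ≤ ‖e t₀‖ * ‖x‖ * ‖y‖ :=
          mul_le_mul_of_nonneg_right ((e t₀).le_opNorm x) (norm_nonneg y)
  have hB₁le : ‖B₁‖ ≤ 1 := by
    refine ContinuousLinearMap.opNorm_le_bound _ zero_le_one fun x => ?_
    refine ContinuousLinearMap.opNorm_le_bound _ (by positivity) fun y => ?_
    rw [hB₁app, norm_mul, hcnorm]
    calc ‖e t₀‖⁻¹ * ‖e t₀ x y‖ ≤ ‖e t₀‖⁻¹ * (‖e t₀‖ * ‖x‖ * ‖y‖) :=
          mul_le_mul_of_nonneg_left (he_le x y) (by positivity)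
      _ = 1 * ‖x‖ * ‖y‖ := by field_simp
  have hB₁norm : ‖B₁‖ = 1 := by
    refine le_antisymm hB₁le ?_
    have h1 : ‖e t₀‖ ≤ ‖e t₀‖ * ‖B₁‖ := by
      refine ContinuousLinearMap.opNorm_le_bound _
        (mul_nonneg hB₀pos.le (ContinuousLinearMap.opNorm_nonneg B₁)) fun x => ?_
      refine ContinuousLinearMap.opNorm_le_bound _
        (mul_nonneg (mul_nonneg hB₀pos.le (ContinuousLinearMap.opNorm_nonneg B₁))
          (norm_nonneg x)) fun y => ?_
      have h2 : ‖e t₀ x y‖ = ‖e t₀‖ * ‖B₁ x y‖ := by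
        rw [hB₁app, norm_mul, hcnorm]
        field_simp
      calc ‖e t₀ x y‖ = ‖e t₀‖ * ‖B₁ x y‖ := h2
        _ ≤ ‖e t₀‖ * (‖B₁‖ * ‖x‖ * ‖y‖) := by
            refine mul_le_mul_of_nonneg_left ?_ hB₀pos.le
            calc ‖B₁ x y‖ ≤ ‖B₁ x‖ * ‖y‖ := (B₁ x).le_opNorm y
              _ ≤ ‖B₁‖ * ‖x‖ * ‖y‖ :=
                  mul_le_mul_of_nonneg_right (B₁.le_opNorm x) (norm_nonneg y)
        _ = ‖e t₀‖ * ‖B₁‖ * ‖x‖ * ‖y‖ := by ring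
    exact (mul_le_mul_iff_right₀ hB₀pos).mp (by linarith)
  have hB₁x : 1 - η₀ < ‖B₁ x₀ y₀‖ := by
    have h1 : ‖B₁ x₀ y₀‖ = ‖e t₀‖⁻¹ * ‖e t₀ x₀ y₀‖ := by
      rw [hB₁app, norm_mul, hcnorm]
    have h2 : ‖e t₀ x₀ y₀‖ ≤ ‖B₁ x₀ y₀‖ := by
      rw [h1]
      exact le_mul_of_one_le_left (norm_nonneg _) hinv1
    have h3 : 1 - η₀ ≤ 1 - η := by linarith
    linarith
  obtain ⟨A₀, hA₀n, hA₀xy, hA₀B₁⟩ := hbpb B₁ x₀ y₀ hB₁norm hx₀ hy₀ hB₁x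
  -- distance from B₁ to e t₀
  have hB₁B₀ : ‖B₁ - e t₀‖ ≤ η := by
    refine ContinuousLinearMap.opNorm_le_bound _ (by linarith) fun x => ?_
    refine ContinuousLinearMap.opNorm_le_bound _ (by positivity) fun y => ?_
    have h1 : (B₁ - e t₀) x y = (c - 1) * (e t₀ x y) := by
      simp only [ContinuousLinearMap.sub_apply]
      rw [hB₁app]; ring
    have h2 : ‖c - 1‖ = ‖e t₀‖⁻¹ - 1 := by
      have : c - 1 = ((((‖e t₀‖⁻¹ : ℝ) - 1 : ℝ)) : 𝕜) := by
        rw [hcdef]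
        push_cast [RCLike.ofReal_inv]
        ring
      rw [this, RCLike.norm_ofReal, abs_of_nonneg (by linarith)]
    rw [h1, norm_mul, h2]
    have h3 : (‖e t₀‖⁻¹ - 1) * ‖e t₀‖ = 1 - ‖e t₀‖ := by
      field_simp
    calc (‖e t₀‖⁻¹ - 1) * ‖e t₀ x y‖ ≤ (‖e t₀‖⁻¹ - 1) * (‖e t₀‖ * ‖x‖ * ‖y‖) :=
          mul_le_mul_of_nonneg_left (he_le x y) (by linarith)
      _ = (1 - ‖e t₀‖) * ‖x‖ * ‖y‖ := by rw [show (‖e t₀‖⁻¹ - 1) * (‖e t₀‖ * ‖x‖ * ‖y‖) = ((‖e t₀‖⁻¹ - 1) * ‖e t₀‖) * ‖x‖ * ‖y‖ by ring, h3]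
      _ ≤ η * ‖x‖ * ‖y‖ := by
          have h4 : 1 - ‖e t₀‖ ≤ η := by linarith
          have := mul_le_mul_of_nonneg_right
            (mul_le_mul_of_nonneg_right h4 (norm_nonneg x)) (norm_nonneg y)
          linarith
  have hA₀B₀ : ‖A₀ - e t₀‖ ≤ ε/2 := by
    calc ‖A₀ - e t₀‖ ≤ ‖A₀ - B₁‖ + ‖B₁ - e t₀‖ := by
          have heq2 : A₀ - e t₀ = (A₀ - B₁) + (B₁ - e t₀) := by abel
          rw [heq2]; exact norm_add_le (A₀ - B₁) (B₁ - e t₀)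
      _ ≤ ε/4 + η := add_le_add hA₀B₁.le hB₁B₀
      _ ≤ ε/2 := by linarith
  -- equicontinuity of the image of B at t₀
  set S : Set C(K,𝕜) := Set.image2 (fun x y => B x y)
    (Metric.closedBall (0:X) 1) (Metric.closedBall (0:Y) 1) with hSdef
  have hec : ∃ V : Set K, IsOpen V ∧ t₀ ∈ V ∧
      ∀ g ∈ S, ∀ t ∈ V, ‖g t - g t₀‖ ≤ ε/4 := by
    rw [CompactBilinear, Metric.totallyBounded_iff] at hBcomp
    obtain ⟨F, hFfin, hFcov⟩ := hBcomp (ε/12) (by linarith)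
    refine ⟨⋂ g ∈ F, {t | ‖g t - g t₀‖ < ε/12}, ?_, ?_, ?_⟩
    · refine hFfin.isOpen_biInter fun g _ => ?_
      have : Continuous fun t => ‖g t - g t₀‖ :=
        ((map_continuous g).sub continuous_const).norm
      exact isOpen_lt this continuous_const
    · refine Set.mem_iInter₂.mpr fun g _ => ?_
      simp [show (0:ℝ) < ε/12 by linarith]
    · intro g hg t ht
      obtain ⟨g', hg', hdist⟩ := Set.mem_iUnion₂.mp (hFcov hg)
      have h1 : ‖g t - g' t‖ ≤ dist g g' := by
        rw [← dist_eq_norm]; exact ContinuousMap.dist_apply_le_dist t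
      have h2 : ‖g' t₀ - g t₀‖ ≤ dist g g' := by
        rw [← dist_eq_norm, dist_comm]; exact ContinuousMap.dist_apply_le_dist t₀
      have h3 : ‖g' t - g' t₀‖ < ε/12 := Set.mem_iInter₂.mp ht g' hg'
      have hd : dist g g' < ε/12 := Metric.mem_ball.mp hdist
      calc ‖g t - g t₀‖ = ‖(g t - g' t) + (g' t - g' t₀) + (g' t₀ - g t₀)‖ := by abel_nf
        _ ≤ ‖(g t - g' t) + (g' t - g' t₀)‖ + ‖g' t₀ - g t₀‖ := norm_add_le _ _
        _ ≤ ‖g t - g' t‖ + ‖g' t - g' t₀‖ + ‖g' t₀ - g t₀‖ := by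
            have := norm_add_le (g t - g' t) (g' t - g' t₀); linarith
        _ ≤ ε/4 := by linarith
  obtain ⟨V, hVopen, ht₀V, hV⟩ := hec
  -- key bilinear bound for evaluations at points of V
  have hkey : ∀ t ∈ V, ∀ (x : X) (y : Y), ‖(e t - e t₀) x y‖ ≤ ε/4 * ‖x‖ * ‖y‖ := by
    intro t ht x y
    refine bilin_bound_of_unit (e t - e t₀) (by linarith) ?_ x y
    intro x hx y hy
    have hmem : B x y ∈ S := Set.mem_image2_of_mem
      (Metric.mem_closedBall.mpr (by simpa using hx))
      (Metric.mem_closedBall.mpr (by simpa using hy))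
    have := hV (B x y) hmem t ht
    simpa [ContinuousLinearMap.sub_apply, he] using this
  -- Urysohn function
  obtain ⟨f, hf0, hf1, hf01⟩ := exists_continuous_zero_one_of_isClosed
    (isClosed_compl_iff.mpr hVopen) isClosed_singleton
    (Set.disjoint_singleton_right.mpr (fun hc => hc ht₀V))
  set F : C(K,𝕜) := (⟨ofReal, RCLike.continuous_ofReal⟩ : C(ℝ,𝕜)).comp f with hFdef
  have hFt : ∀ t, F t = ((f t : ℝ) : 𝕜) := fun t => rfl
  have hFnorm : ∀ t, ‖F t‖ = f t := by
    intro t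
    rw [hFt, RCLike.norm_ofReal, abs_of_nonneg (hf01 t).1]
  have hF1 : F t₀ = 1 := by
    rw [hFt, hf1 (Set.mem_singleton t₀)]; simp
  have hF0 : ∀ t, t ∉ V → F t = 0 := by
    intro t ht
    rw [hFt, hf0 ht]; simp
  have h1F : ∀ t, ‖1 - F t‖ = 1 - f t := by
    intro t
    have : (1 : 𝕜) - F t = (((1 - f t : ℝ)) : 𝕜) := by rw [hFt]; push_cast; ring
    rw [this, RCLike.norm_ofReal, abs_of_nonneg (by linarith [(hf01 t).2])]
  -- the perturbed operator
  set T : C(K,𝕜) →L[𝕜] C(K,𝕜) :=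
    ContinuousLinearMap.id 𝕜 C(K,𝕜) - ContinuousLinearMap.mul 𝕜 C(K,𝕜) F with hTdef
  set A : X →L[𝕜] Y →L[𝕜] C(K,𝕜) :=
    (ContinuousLinearMap.compL 𝕜 Y C(K,𝕜) C(K,𝕜) T).comp B +
      (((ContinuousLinearMap.smulRightL 𝕜 Y (C(K,𝕜))).flip F).comp A₀) with hAdef
  have hsrl : ∀ (cY : Y →L[𝕜] 𝕜),
      ContinuousLinearMap.smulRightL 𝕜 Y (C(K,𝕜)) cY F = cY.smulRight F := fun _ => rfl
  have hApp : ∀ (x : X) (y : Y) (t : K),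
      A x y t = B x y t - F t * B x y t + A₀ x y * F t := by
    intro x y t
    rw [hAdef, hTdef]
    simp only [ContinuousLinearMap.add_apply, ContinuousLinearMap.comp_apply,
      ContinuousLinearMap.compL_apply, ContinuousLinearMap.sub_apply,
      ContinuousLinearMap.coe_id', id_eq, ContinuousLinearMap.mul_apply',
      ContinuousLinearMap.flip_apply, hsrl, ContinuousLinearMap.smulRight_apply,
      ContinuousMap.add_apply, ContinuousMap.sub_apply, ContinuousMap.mul_apply,
      ContinuousMap.smul_apply, smul_eq_mul, ContinuousLinearMap.id_apply]
  have hA₀xyle : ∀ (x : X) (y : Y), ‖A₀ x y‖ ≤ ‖x‖ * ‖y‖ := by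
    intro x y
    calc ‖A₀ x y‖ ≤ ‖A₀ x‖ * ‖y‖ := (A₀ x).le_opNorm y
      _ ≤ ‖A₀‖ * ‖x‖ * ‖y‖ := mul_le_mul_of_nonneg_right (A₀.le_opNorm x) (norm_nonneg y)
      _ = ‖x‖ * ‖y‖ := by rw [hA₀n]; ring
  -- pointwise bound giving ‖A x y‖ ≤ ‖x‖ ‖y‖
  have hAptw : ∀ (x : X) (y : Y), ‖A x y‖ ≤ ‖x‖ * ‖y‖ := by
    intro x y
    refine (ContinuousMap.norm_le _ (by positivity)).mpr fun t => ?_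
    have h1 : A x y t = (1 - F t) * B x y t + F t * A₀ x y := by rw [hApp]; ring
    rw [h1]
    calc ‖(1 - F t) * B x y t + F t * A₀ x y‖
        ≤ ‖(1 - F t) * B x y t‖ + ‖F t * A₀ x y‖ := norm_add_le _ _
      _ = ‖1 - F t‖ * ‖B x y t‖ + ‖F t‖ * ‖A₀ x y‖ := by rw [norm_mul, norm_mul]
      _ ≤ (1 - f t) * (‖x‖ * ‖y‖) + f t * (‖x‖ * ‖y‖) := by
          rw [h1F, hFnorm]
          have hb : ‖B x y t‖ ≤ ‖x‖ * ‖y‖ :=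
            le_trans (ContinuousMap.norm_coe_le_norm _ _) (hBxyle x y)
          have ha : ‖A₀ x y‖ ≤ ‖x‖ * ‖y‖ := hA₀xyle x y
          have hft := hf01 t
          exact add_le_add (mul_le_mul_of_nonneg_left hb (by linarith [hft.2]))
            (mul_le_mul_of_nonneg_left ha hft.1)
      _ = ‖x‖ * ‖y‖ := by ring
  have hAle : ‖A‖ ≤ 1 := by
    refine ContinuousLinearMap.opNorm_le_bound _ zero_le_one fun x => ?_
    refine ContinuousLinearMap.opNorm_le_bound _ (by positivity) fun y => ?_
    calc ‖A x y‖ ≤ ‖x‖ * ‖y‖ := hAptw x y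
      _ = 1 * ‖x‖ * ‖y‖ := by ring
  have hAx : ‖A x₀ y₀‖ = 1 := by
    have hle : ‖A x₀ y₀‖ ≤ 1 := by
      have := hAptw x₀ y₀; rw [hx₀, hy₀] at this; simpa using this
    have hpt : A x₀ y₀ t₀ = A₀ x₀ y₀ := by rw [hApp, hF1]; ring
    have hge : 1 ≤ ‖A x₀ y₀‖ := by
      have := ContinuousMap.norm_coe_le_norm (A x₀ y₀) t₀
      rw [hpt, hA₀xy] at this
      exact this
    linarith
  have hAnorm : ‖A‖ = 1 := by
    refine le_antisymm hAle ?_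
    have h1 : ‖A x₀ y₀‖ ≤ ‖A‖ := by
      calc ‖A x₀ y₀‖ ≤ ‖A x₀‖ * ‖y₀‖ := (A x₀).le_opNorm y₀
        _ ≤ ‖A‖ * ‖x₀‖ * ‖y₀‖ := mul_le_mul_of_nonneg_right (A.le_opNorm x₀) (norm_nonneg y₀)
        _ = ‖A‖ := by rw [hx₀, hy₀]; ring
    rw [hAx] at h1
    exact h1
  -- distance between A and B
  have hAB : ‖A - B‖ < ε := by
    have hbound : ‖A - B‖ ≤ 3*ε/4 := by
      refine ContinuousLinearMap.opNorm_le_bound _ (by linarith) fun x => ?_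
      refine ContinuousLinearMap.opNorm_le_bound _ (by positivity) fun y => ?_
      refine (ContinuousMap.norm_le _ (by positivity)).mpr fun t => ?_
      have h1 : (A - B) x y t = F t * (A₀ x y - B x y t) := by
        simp only [ContinuousLinearMap.sub_apply, ContinuousMap.sub_apply]
        rw [hApp]; ring
      rw [h1, norm_mul, hFnorm]
      by_cases htV : t ∈ V
      · have h2 : ‖A₀ x y - B x y t‖ ≤ 3*ε/4 * ‖x‖ * ‖y‖ := by
          have ha : ‖A₀ x y - e t₀ x y‖ ≤ ε/2 * ‖x‖ * ‖y‖ := by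
            calc ‖A₀ x y - e t₀ x y‖ = ‖(A₀ - e t₀) x y‖ := by
                  simp [ContinuousLinearMap.sub_apply]
              _ ≤ ‖(A₀ - e t₀) x‖ * ‖y‖ := ((A₀ - e t₀) x).le_opNorm y
              _ ≤ ‖A₀ - e t₀‖ * ‖x‖ * ‖y‖ :=
                  mul_le_mul_of_nonneg_right ((A₀ - e t₀).le_opNorm x) (norm_nonneg y)
              _ ≤ ε/2 * ‖x‖ * ‖y‖ := by
                  have := mul_le_mul_of_nonneg_right
                    (mul_le_mul_of_nonneg_right hA₀B₀ (norm_nonneg x)) (norm_nonneg y)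
                  linarith
          have hb : ‖e t₀ x y - B x y t‖ ≤ ε/4 * ‖x‖ * ‖y‖ := by
            have := hkey t htV x y
            have heq : (e t - e t₀) x y = B x y t - e t₀ x y := by
              simp [ContinuousLinearMap.sub_apply, he]
            rw [heq] at this
            rw [show e t₀ x y - B x y t = -(B x y t - e t₀ x y) by ring, norm_neg]
            exact this
          calc ‖A₀ x y - B x y t‖
              = ‖(A₀ x y - e t₀ x y) + (e t₀ x y - B x y t)‖ := by ring_nf
            _ ≤ ‖A₀ x y - e t₀ x y‖ + ‖e t₀ x y - B x y t‖ := norm_add_le _ _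
            _ ≤ 3*ε/4 * ‖x‖ * ‖y‖ := by linarith
        calc f t * ‖A₀ x y - B x y t‖ ≤ 1 * ‖A₀ x y - B x y t‖ :=
              mul_le_mul_of_nonneg_right (hf01 t).2 (norm_nonneg _)
          _ = ‖A₀ x y - B x y t‖ := one_mul _
          _ ≤ 3*ε/4 * ‖x‖ * ‖y‖ := h2
      · have : f t = 0 := hf0 htV
        rw [this, zero_mul]
        positivity
    linarith
  -- compactness of A
  have hAcomp : CompactBilinear A := by
    rw [CompactBilinear]
    set Φ : C(K,𝕜) × 𝕜 →L[𝕜] C(K,𝕜) :=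
      T.comp (ContinuousLinearMap.fst 𝕜 C(K,𝕜) 𝕜) +
        (ContinuousLinearMap.snd 𝕜 C(K,𝕜) 𝕜).smulRight F with hΦdef
    have hsub : Set.image2 (fun x y => A x y)
        (Metric.closedBall (0:X) 1) (Metric.closedBall (0:Y) 1) ⊆
        Φ '' (S ×ˢ Metric.closedBall (0:𝕜) 1) := by
      rintro z ⟨x, hx, y, hy, rfl⟩
      refine ⟨(B x y, A₀ x y), ⟨Set.mem_image2_of_mem hx hy, ?_⟩, ?_⟩
      · rw [Metric.mem_closedBall, dist_zero_right]
        have hx1 : ‖x‖ ≤ 1 := by simpa using Metric.mem_closedBall.mp hx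
        have hy1 : ‖y‖ ≤ 1 := by simpa using Metric.mem_closedBall.mp hy
        calc ‖A₀ x y‖ ≤ ‖x‖ * ‖y‖ := hA₀xyle x y
          _ ≤ 1 := by
            have := mul_le_mul hx1 hy1 (norm_nonneg y) zero_le_one
            linarith
      · rw [hΦdef, hAdef]
        ext t
        simp only [ContinuousLinearMap.add_apply, ContinuousLinearMap.comp_apply,
          ContinuousLinearMap.compL_apply, ContinuousLinearMap.coe_fst',
          ContinuousLinearMap.coe_snd', ContinuousLinearMap.flip_apply, hsrl,
          ContinuousLinearMap.smulRight_apply, ContinuousMap.add_apply,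
          ContinuousMap.smul_apply, smul_eq_mul]
    refine TotallyBounded.subset hsub ?_
    refine TotallyBounded.image ?_ Φ.uniformContinuous
    have hScl : IsCompact (closure S) :=
      isCompact_iff_totallyBounded_isComplete.mpr
        ⟨hBcomp.closure, isClosed_closure.isComplete⟩
    have hprod : IsCompact (closure S ×ˢ Metric.closedBall (0:𝕜) 1) :=
      hScl.prod (isCompact_closedBall _ _)
    exact TotallyBounded.subset
      (Set.prod_mono subset_closure (le_refl _)) hprod.totallyBounded
  exact ⟨A, hAcomp, hAnorm, hAx, hAB⟩
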